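/- arXiv:2112.15183 — 3 statements merged into one kernel-verified Lean document; each statement's English description precedes it below -/
import Mathlib

section
/- Let n ≥ 3 and let α : ZMod n → ℝ satisfy (i) ∑_k α_k = n−1 and (ii) for every r : ZMod n, ∑_m α_m · α_{m+r} = (n−2) + (1 if r = 0 else 0). Define the complex matrix W, indexed by pairs (k,m) ∈ ZMod n × ZMod n, by W((k,m),(k',m')) = α_{m−k} if k=k' and m=m', −1 if k=m, k'=m' and k≠k', and 0 otherwise. Then W is block positive, i.e. Re⟨x⊗y, W(x⊗y)⟩ ≥ 0 for all x,y : ZMod n → ℂ, and W is not positive semidefinite; hence W is an entanglement witness. -/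
/-!
Write `W = diag(α_{m-k} + δ_{km}) - ω ω*` with `ω = ∑ₖ |kk⟩`. Then `⟨ω, W ω⟩ = n α₀ + n - n²`,
which is negative because `α₀² ≤ ∑ α² = n - 1 < (n - 1)²`.

For a product vector put `a = |x|`, `b = |y|`, `P = ∑ b²` and `d_k = b_k² + ∑_m α_{m-k} b_m²`.
Since `|∑ x_k y_k| ≤ ∑ a_k b_k`, the form is at least `∑ a_k² d_k - (∑ a_k b_k)²`, so by
Cauchy–Schwarz it suffices that `∑ b_k² / d_k ≤ 1`. The two conditions on `α` (which force
`α ≥ 0`) give `∑ b_k² (d_k - P) = ½ ∑ (d_k - P)²`. Bounding the convex function `1 / d` by its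
chord between the extreme values `d₁ ≤ d₂` of `d` on the support of `b` reduces `∑ b_k² / d_k ≤ 1`
to `-(d₁ - P)(d₂ - P) ≤ ½ ∑ (d_k - P)²`, true because `d₁ - P` and `d₂ - P` are among the summands.
-/

open Matrix Complex
open scoped ComplexOrder

/-- The circulant Bell-diagonal witness candidate in `ℂ^n ⊗ ℂ^n`:
`W((k,m),(k',m')) = α_{m−k}` if `k=k', m=m'`; `−1` if `k=m, k'=m', k≠k'`; `0` otherwise. -/
noncomputable def circulantW (n : ℕ) (α : ZMod n → ℝ) :
    Matrix (ZMod n × ZMod n) (ZMod n × ZMod n) ℂ :=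
  fun p q =>
    if p.1 = q.1 ∧ p.2 = q.2 then ((α (p.2 - p.1) : ℝ) : ℂ)
    else if p.1 = p.2 ∧ q.1 = q.2 ∧ p.1 ≠ q.1 then -1
    else 0

/-- The tensor (product) vector `x ⊗ y` in `ℂ^{n²}`. -/
noncomputable def tensorVec (n : ℕ) (x y : ZMod n → ℂ) : ZMod n × ZMod n → ℂ :=
  fun p => x p.1 * y p.2

section

variable {ι : Type*} [Fintype ι]

theorem inv_le_add_sub_div_mul {a b x : ℝ} (ha : 0 < a) (hax : a ≤ x) (hxb : x ≤ b) :
    x⁻¹ ≤ (a + b - x) / (a * b) := by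
  rw [inv_eq_one_div,
    div_le_div_iff₀ (ha.trans_le hax) (mul_pos ha (ha.trans_le (hax.trans hxb)))]
  nlinarith [mul_nonneg (sub_nonneg.2 hax) (sub_nonneg.2 hxb)]

theorem neg_mul_le_half_sum_sq (u : ι → ℝ) (i j : ι) :
    -(u i * u j) ≤ (∑ k, u k ^ 2) / 2 := by
  classical
  have hsum : 0 ≤ ∑ k, u k ^ 2 := Finset.sum_nonneg fun k _ => sq_nonneg (u k)
  rcases eq_or_ne i j with rfl | hij
  · nlinarith [sq_nonneg (u i)]
  · have hpair : u i ^ 2 + u j ^ 2 ≤ ∑ k, u k ^ 2 := by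
      rw [← Finset.sum_pair (f := fun k => u k ^ 2) hij]
      exact Finset.sum_le_univ_sum_of_nonneg fun k => sq_nonneg _
    nlinarith [sq_nonneg (u i + u j)]

theorem sum_div_le_one_of_sum_mul_sub_eq (q d : ι → ℝ) (hq : ∀ k, 0 ≤ q k)
    (hqd : ∀ k, q k ≤ d k)
    (h : ∑ k, q k * (d k - ∑ l, q l) = (∑ k, (d k - ∑ l, q l) ^ 2) / 2) :
    ∑ k, q k / d k ≤ 1 := by
  classical
  set P := ∑ l, q l
  set s := Finset.univ.filter fun k => q k ≠ 0
  rcases s.eq_empty_or_nonempty with hs | hs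
  · have hq0 : ∀ k, q k = 0 := fun k => by
      simpa [s] using Finset.filter_eq_empty_iff.1 hs (Finset.mem_univ k)
    simp [hq0]
  obtain ⟨k₁, hk₁, hmin⟩ := s.exists_min_image d hs
  obtain ⟨k₂, hk₂, hmax⟩ := s.exists_max_image d hs
  have hpos : ∀ k ∈ s, 0 < d k := fun k hk =>
    ((hq k).lt_of_ne (Finset.mem_filter.1 hk).2.symm).trans_le (hqd k)
  have hsum : ∑ k, q k * (d k₁ + d k₂ - d k)
      = P * (d k₁ + d k₂) - P ^ 2 - ∑ k, q k * (d k - P) := by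
    simp only [mul_sub, mul_add, Finset.sum_sub_distrib, Finset.sum_add_distrib, ← Finset.sum_mul]
    ring
  calc ∑ k, q k / d k ≤ ∑ k, q k * ((d k₁ + d k₂ - d k) / (d k₁ * d k₂)) := by
        refine Finset.sum_le_sum fun k _ => ?_
        by_cases hk : q k = 0
        · simp [hk]
        · have hks : k ∈ s := by simp [s, hk]
          rw [div_eq_mul_inv]
          exact mul_le_mul_of_nonneg_left
            (inv_le_add_sub_div_mul (hpos k₁ hk₁) (hmin k hks) (hmax k hks)) (hq k)
    _ = (∑ k, q k * (d k₁ + d k₂ - d k)) / (d k₁ * d k₂) := by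
        simp only [mul_div_assoc', Finset.sum_div]
    _ ≤ 1 := by
        rw [div_le_one (mul_pos (hpos k₁ hk₁) (hpos k₂ hk₂)), hsum, h]
        nlinarith [neg_mul_le_half_sum_sq (fun k => d k - P) k₁ k₂]

theorem sq_sum_mul_le_sum_sq_mul_of_sum_div_le_one (a b d : ι → ℝ) (hbd : ∀ k, b k ^ 2 ≤ d k)
    (h : ∑ k, b k ^ 2 / d k ≤ 1) :
    (∑ k, a k * b k) ^ 2 ≤ ∑ k, a k ^ 2 * d k := by
  have hd : ∀ k, 0 ≤ d k := fun k => (sq_nonneg _).trans (hbd k)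
  calc (∑ k, a k * b k) ^ 2 ≤ (∑ k, a k ^ 2 * d k) * ∑ k, b k ^ 2 / d k := by
        refine Finset.sum_sq_le_sum_mul_sum_of_sq_le_mul _
          (fun k _ => mul_nonneg (sq_nonneg _) (hd k)) (fun k _ => div_nonneg (sq_nonneg _) (hd k))
          fun k _ => ?_
        rcases (hd k).eq_or_lt with hk | hk
        · have hb : b k = 0 :=
            pow_eq_zero_iff two_ne_zero |>.1 (le_antisymm (hk ▸ hbd k) (sq_nonneg _))
          simp [hb]
        · rw [mul_pow, mul_assoc, mul_div_cancel₀ _ hk.ne']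
    _ ≤ ∑ k, a k ^ 2 * d k :=
        mul_le_of_le_one_right (Finset.sum_nonneg fun k _ => mul_nonneg (sq_nonneg _) (hd k)) h

theorem sum_ite_fst_eq_snd {M : Type*} [DecidableEq ι] [AddCommMonoid M]
    (f : ι × ι → M) : ∑ p : ι × ι, (if p.1 = p.2 then f p else 0) = ∑ k, f (k, k) := by
  simp [Fintype.sum_prod_type]

end

section

def maxEntangledVec (n : ℕ) : ZMod n × ZMod n → ℂ :=
  fun p => if p.1 = p.2 then 1 else 0

variable {n : ℕ}

theorem circulantW_eq_diagonal_sub_vecMulVec (α : ZMod n → ℝ) :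
    circulantW n α = diagonal (fun p => ((α (p.2 - p.1) + if p.1 = p.2 then 1 else 0 : ℝ) : ℂ))
      - vecMulVec (maxEntangledVec n) (maxEntangledVec n) := by
  ext ⟨k, m⟩ ⟨k', m'⟩
  simp only [circulantW, maxEntangledVec, diagonal_apply, vecMulVec_apply, Matrix.sub_apply,
    Prod.mk.injEq]
  split_ifs <;> push_cast <;> grind

variable [NeZero n]

theorem maxEntangledVec_dotProduct (v : ZMod n × ZMod n → ℂ) :
    maxEntangledVec n ⬝ᵥ v = ∑ k, v (k, k) := by
  simp [dotProduct, maxEntangledVec, ite_mul, sum_ite_fst_eq_snd]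

theorem dotProduct_maxEntangledVec (v : ZMod n × ZMod n → ℂ) :
    v ⬝ᵥ maxEntangledVec n = ∑ k, v (k, k) := by
  rw [dotProduct_comm, maxEntangledVec_dotProduct]

theorem re_star_dotProduct_circulantW_mulVec (α : ZMod n → ℝ) (v : ZMod n × ZMod n → ℂ) :
    (star v ⬝ᵥ circulantW n α *ᵥ v).re
      = ∑ p, α (p.2 - p.1) * ‖v p‖ ^ 2 + ∑ k, ‖v (k, k)‖ ^ 2 - ‖∑ k, v (k, k)‖ ^ 2 := by
  have hdiag : ∀ (r : ℝ) (z : ℂ), (star z * (r * z)).re = r * ‖z‖ ^ 2 := fun r z => by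
    rw [mul_left_comm, Complex.star_def, Complex.conj_mul', ← Complex.ofReal_pow,
      ← Complex.ofReal_mul, Complex.ofReal_re]
  rw [circulantW_eq_diagonal_sub_vecMulVec, sub_mulVec, dotProduct_sub, vecMulVec_mulVec,
    op_smul_eq_smul, dotProduct_smul, maxEntangledVec_dotProduct, dotProduct_maxEntangledVec,
    smul_eq_mul, sub_re]
  simp only [dotProduct, mulVec_diagonal, Pi.star_apply, re_sum, hdiag, add_mul, ite_mul, one_mul,
    zero_mul, Finset.sum_add_distrib, sum_ite_fst_eq_snd, ← star_sum]
  rw [Complex.star_def, Complex.mul_conj', ← Complex.ofReal_pow, Complex.ofReal_re]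

theorem re_star_dotProduct_circulantW_mulVec_maxEntangledVec (α : ZMod n → ℝ) :
    (star (maxEntangledVec n) ⬝ᵥ circulantW n α *ᵥ maxEntangledVec n).re
      = n * α 0 + n - n ^ 2 := by
  simp [re_star_dotProduct_circulantW_mulVec, maxEntangledVec, apply_ite, sum_ite_fst_eq_snd]

def circConv (α q : ZMod n → ℝ) (k : ZMod n) : ℝ :=
  ∑ m, α (m - k) * q m

theorem circConv_nonneg {α q : ZMod n → ℝ} (hα : ∀ k, 0 ≤ α k) (hq : ∀ k, 0 ≤ q k)
    (k : ZMod n) : 0 ≤ circConv α q k :=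
  Finset.sum_nonneg fun m _ => mul_nonneg (hα _) (hq m)

theorem sum_circConv (α q : ZMod n → ℝ) : ∑ k, circConv α q k = (∑ k, α k) * ∑ m, q m := by
  simp only [circConv]
  rw [Finset.sum_comm, Finset.mul_sum]
  refine Finset.sum_congr rfl fun m _ => ?_
  rw [← Finset.sum_mul, Fintype.sum_equiv (Equiv.subLeft m) (fun k => α (m - k)) α fun _ => rfl]

structure IsCirculantWeight (α : ZMod n → ℝ) : Prop where
  sum_eq : ∑ k, α k = (n : ℝ) - 1
  sum_mul_add_eq : ∀ r, ∑ m, α m * α (m + r) = ((n : ℝ) - 2) + if r = 0 then 1 else 0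

namespace IsCirculantWeight

variable {α : ZMod n → ℝ}

theorem sum_sq (hα : IsCirculantWeight α) : ∑ k, α k ^ 2 = (n : ℝ) - 1 := by
  have h := hα.sum_mul_add_eq 0
  simp only [add_zero, if_true] at h
  simp only [sq, h]
  ring

theorem nonneg (hα : IsCirculantWeight α) (k : ZMod n) : 0 ≤ α k := by
  have hsum : ∑ m, (α m - 1) ^ 2 = 1 := by
    simp only [sub_sq, Finset.sum_add_distrib, Finset.sum_sub_distrib, ← Finset.mul_sum, hα.sum_sq,
      hα.sum_eq, Finset.sum_const, Finset.card_univ, ZMod.card, nsmul_eq_mul, mul_one, one_pow]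
    ring
  have hk : (α k - 1) ^ 2 ≤ 1 :=
    hsum ▸ Finset.single_le_sum (fun m _ => sq_nonneg (α m - 1)) (Finset.mem_univ k)
  nlinarith

theorem sum_mul_sub_mul_sub (hα : IsCirculantWeight α) (m m' : ZMod n) :
    ∑ k, α (m - k) * α (m' - k) = ((n : ℝ) - 2) + if m = m' then 1 else 0 := by
  rw [Fintype.sum_equiv (Equiv.subLeft m) _ (fun j => α j * α (j + (m' - m)))
    fun k => by rw [Equiv.subLeft_apply, sub_add_sub_cancel'], hα.sum_mul_add_eq]
  simp only [sub_eq_zero, eq_comm]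

theorem sum_circConv_sq (hα : IsCirculantWeight α) (q : ZMod n → ℝ) :
    ∑ k, circConv α q k ^ 2 = ((n : ℝ) - 2) * (∑ m, q m) ^ 2 + ∑ m, q m ^ 2 := by
  calc ∑ k, circConv α q k ^ 2
      = ∑ m, ∑ m', (∑ k, α (m - k) * α (m' - k)) * (q m * q m') := by
        simp only [circConv, sq, Finset.sum_mul, Finset.mul_sum]
        rw [Finset.sum_comm]
        refine Finset.sum_congr rfl fun m _ => ?_
        rw [Finset.sum_comm]
        refine Finset.sum_congr rfl fun m' _ => Finset.sum_congr rfl fun k _ => by ring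
    _ = _ := by
        simp only [hα.sum_mul_sub_mul_sub, add_mul, ite_mul, one_mul, zero_mul,
          Finset.sum_add_distrib, Finset.sum_ite_eq, Finset.mem_univ, if_true, sq,
          ← Finset.mul_sum, Finset.sum_mul]

theorem sum_mul_sub_sum_eq (hα : IsCirculantWeight α) (q : ZMod n → ℝ) :
    ∑ k, q k * (q k + circConv α q k - ∑ l, q l)
      = (∑ k, (q k + circConv α q k - ∑ l, q l) ^ 2) / 2 := by
  set c := circConv α q
  set P := ∑ l, q l with hP
  have hlin : ∑ k, q k * (q k + c k - P) = ∑ k, q k ^ 2 + ∑ k, q k * c k - P ^ 2 := by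
    simp only [mul_sub, mul_add, Finset.sum_sub_distrib, Finset.sum_add_distrib, ← Finset.sum_mul,
      sq, P]
  have hquad : ∑ k, (q k + c k - P) ^ 2
      = ∑ k, q k ^ 2 + ∑ k, c k ^ 2 + n * P ^ 2 + 2 * ∑ k, q k * c k - 2 * P * P
        - 2 * P * ∑ k, c k := by
    simp only [fun k => (by ring : (q k + c k - P) ^ 2
      = q k ^ 2 + c k ^ 2 + P ^ 2 + 2 * (q k * c k) - 2 * P * q k - 2 * P * c k),
      Finset.sum_add_distrib, Finset.sum_sub_distrib, ← Finset.mul_sum, Finset.sum_const,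
      Finset.card_univ, ZMod.card, nsmul_eq_mul, P]
  rw [hlin, hquad, hα.sum_circConv_sq, sum_circConv, hα.sum_eq, ← hP]
  ring

theorem sq_sum_mul_le (hα : IsCirculantWeight α) (a b : ZMod n → ℝ) :
    (∑ k, a k * b k) ^ 2 ≤ ∑ k, a k ^ 2 * (b k ^ 2 + circConv α (fun m => b m ^ 2) k) := by
  have hbd : ∀ k, b k ^ 2 ≤ b k ^ 2 + circConv α (fun m => b m ^ 2) k := fun k =>
    le_add_of_nonneg_right (circConv_nonneg hα.nonneg (fun m => sq_nonneg (b m)) k)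
  exact sq_sum_mul_le_sum_sq_mul_of_sum_div_le_one a b _ hbd
    (sum_div_le_one_of_sum_mul_sub_eq _ _ (fun k => sq_nonneg (b k)) hbd (hα.sum_mul_sub_sum_eq _))

theorem re_star_dotProduct_circulantW_mulVec_tensorVec_nonneg
    (hα : IsCirculantWeight α) (x y : ZMod n → ℂ) :
    0 ≤ (star (tensorVec n x y) ⬝ᵥ circulantW n α *ᵥ tensorVec n x y).re := by
  have hnorm : ‖∑ k, tensorVec n x y (k, k)‖ ≤ ∑ k, ‖x k‖ * ‖y k‖ :=
    (norm_sum_le _ _).trans_eq (by simp [tensorVec])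
  have hexpand : ∑ k, ‖x k‖ ^ 2 * (‖y k‖ ^ 2 + circConv α (fun m => ‖y m‖ ^ 2) k)
      = ∑ p, α (p.2 - p.1) * ‖tensorVec n x y p‖ ^ 2 + ∑ k, ‖tensorVec n x y (k, k)‖ ^ 2 := by
    simp only [tensorVec, circConv, norm_mul, mul_pow, mul_add, Finset.mul_sum,
      Finset.sum_add_distrib, Fintype.sum_prod_type]
    rw [add_comm]
    congr 1
    exact Finset.sum_congr rfl fun k _ => Finset.sum_congr rfl fun m _ => by ring
  rw [re_star_dotProduct_circulantW_mulVec, ← hexpand]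
  nlinarith [hα.sq_sum_mul_le (fun k => ‖x k‖) (fun k => ‖y k‖),
    pow_le_pow_left₀ (norm_nonneg _) hnorm 2]

theorem not_posSemidef_circulantW (hα : IsCirculantWeight α) (hn : 3 ≤ n) :
    ¬ (circulantW n α).PosSemidef := by
  intro hW
  have h := (Complex.le_def.1 (hW.dotProduct_mulVec_nonneg (maxEntangledVec n))).1
  have hα₀ : α 0 ^ 2 ≤ n - 1 :=
    hα.sum_sq ▸ Finset.single_le_sum (fun k _ => sq_nonneg (α k)) (Finset.mem_univ 0)
  have hn' : (3 : ℝ) ≤ n := by exact_mod_cast hn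
  rw [Complex.zero_re, re_star_dotProduct_circulantW_mulVec_maxEntangledVec] at h
  have hα₀' : (n : ℝ) - 1 ≤ α 0 := by nlinarith
  nlinarith

end IsCirculantWeight

end

theorem circulantW_is_entanglement_witness (n : ℕ) [NeZero n] (hn : 3 ≤ n)
    (α : ZMod n → ℝ)
    (h1 : ∑ k : ZMod n, α k = (n : ℝ) - 1)
    (h2 : ∀ r : ZMod n, ∑ m : ZMod n, α m * α (m + r)
          = ((n : ℝ) - 2) + (if r = 0 then 1 else 0)) :
    (∀ x y : ZMod n → ℂ,
      0 ≤ (∑ i : ZMod n × ZMod n,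
        star (tensorVec n x y i) * (circulantW n α).mulVec (tensorVec n x y) i).re) ∧
    ¬ (circulantW n α).PosSemidef :=
  have hα : IsCirculantWeight α := ⟨h1, h2⟩
  ⟨hα.re_star_dotProduct_circulantW_mulVec_tensorVec_nonneg, hα.not_posSemidef_circulantW hn⟩
end

section
/- For every θ ∈ [0,π] and every real φ, the inequality 2 + 2·|sin(2φ)| − sin(4φ − θ) − (2 + sin θ)·cos²(2φ − θ) ≥ 0 holds. -/
open Real

theorem key_inequality (θ φ : ℝ) (hθ : θ ∈ Set.Icc 0 π) :
    0 ≤ 2 + 2 * |Real.sin (2 * φ)| - Real.sin (4 * φ - θ)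
        - (2 + Real.sin θ) * Real.cos (2 * φ - θ) ^ 2 := by
  set x := Real.sin (2 * φ) with hx
  set y := Real.cos (2 * φ) with hy
  set u := Real.sin (2 * φ - θ) with hu
  set v := Real.cos (2 * φ - θ) with hv
  have hs : Real.sin (4 * φ - θ) = x * v + y * u := by
    rw [show (4 * φ - θ) = 2 * φ + (2 * φ - θ) by ring, Real.sin_add]
  have hp : Real.sin θ = x * v - y * u := by
    rw [show θ = 2 * φ - (2 * φ - θ) by ring, Real.sin_sub]
  have h2 : u ^ 2 + v ^ 2 = 1 := Real.sin_sq_add_cos_sq _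
  have hvle : |v| ≤ 1 := Real.abs_cos_le_one _
  have hxa : (0:ℝ) ≤ |x| := abs_nonneg _
  have hxv : x * v ≤ |x| := by
    calc x * v ≤ |x * v| := le_abs_self _
    _ = |x| * |v| := abs_mul _ _
    _ ≤ |x| * 1 := by nlinarith
    _ = |x| := mul_one _
  have hxv3 : x * v * v ^ 2 ≤ |x| := by
    have hv3 : |v| ^ 3 ≤ 1 := pow_le_one₀ (abs_nonneg v) hvle
    calc x * v * v ^ 2 ≤ |x * v * v ^ 2| := le_abs_self _
    _ = |x| * |v| ^ 3 := by rw [abs_mul, abs_mul, abs_pow]; ring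
    _ ≤ |x| * 1 := mul_le_mul_of_nonneg_left hv3 hxa
    _ = |x| := mul_one _
  have hyu : y * u ≤ 1 := by
    calc y * u ≤ |y * u| := le_abs_self _
    _ = |y| * |u| := abs_mul _ _
    _ ≤ 1 * 1 := by
        have := Real.abs_cos_le_one (2 * φ)
        have := Real.abs_sin_le_one (2 * φ - θ)
        nlinarith [abs_nonneg y, abs_nonneg u]
    _ = 1 := by ring
  rw [hs, hp]
  nlinarith [mul_nonneg (sq_nonneg u) (by linarith : (0:ℝ) ≤ 2 - y * u), sq_nonneg u]
end

section
/- Let θ ∈ (0,π) and φ ∈ [0, π/2]. Then equality 2 + 2·sin(2φ) − sin(4φ − θ) − (2 + sin θ)·cos²(2φ − θ) = 0 holds if and only if φ = θ/2. Equivalently, the quantity sin²(2φ−θ)·(2 − cos(2φ)·sin(2φ−θ)) + sin(2φ)·(2 − cos(2φ−θ) − cos³(2φ−θ)) is nonnegative and vanishes exactly when φ = θ/2. -/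
open Real

theorem key_inequality_saturation (θ φ : ℝ) (hθ : θ ∈ Set.Ioo 0 π)
    (hφ : φ ∈ Set.Icc 0 (π / 2)) :
    (2 + 2 * Real.sin (2 * φ) - Real.sin (4 * φ - θ)
        - (2 + Real.sin θ) * Real.cos (2 * φ - θ) ^ 2 = 0 ↔ φ = θ / 2) ∧
    (0 ≤ Real.sin (2 * φ - θ) ^ 2 * (2 - Real.cos (2 * φ) * Real.sin (2 * φ - θ))
        + Real.sin (2 * φ) * (2 - Real.cos (2 * φ - θ) - Real.cos (2 * φ - θ) ^ 3)) ∧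
    (Real.sin (2 * φ - θ) ^ 2 * (2 - Real.cos (2 * φ) * Real.sin (2 * φ - θ))
        + Real.sin (2 * φ) * (2 - Real.cos (2 * φ - θ) - Real.cos (2 * φ - θ) ^ 3) = 0
      ↔ φ = θ / 2) := by
  obtain ⟨hθ0, hθπ⟩ := hθ
  obtain ⟨hφ0, hφπ⟩ := hφ
  have hsx : 0 ≤ Real.sin (2 * φ) :=
    Real.sin_nonneg_of_nonneg_of_le_pi (by linarith) (by linarith)
  have hcx1 : Real.cos (2 * φ) ≤ 1 := Real.cos_le_one _
  have hcx2 : -1 ≤ Real.cos (2 * φ) := Real.neg_one_le_cos _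
  have hsy1 : Real.sin (2 * φ - θ) ≤ 1 := Real.sin_le_one _
  have hsy2 : -1 ≤ Real.sin (2 * φ - θ) := Real.neg_one_le_sin _
  have hcy1 : Real.cos (2 * φ - θ) ≤ 1 := Real.cos_le_one _
  have hcy2 : -1 ≤ Real.cos (2 * φ - θ) := Real.neg_one_le_cos _
  -- the two expressions are equal
  have heq : 2 + 2 * Real.sin (2 * φ) - Real.sin (4 * φ - θ)
      - (2 + Real.sin θ) * Real.cos (2 * φ - θ) ^ 2
      = Real.sin (2 * φ - θ) ^ 2 * (2 - Real.cos (2 * φ) * Real.sin (2 * φ - θ))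
        + Real.sin (2 * φ) * (2 - Real.cos (2 * φ - θ) - Real.cos (2 * φ - θ) ^ 3) := by
    have h4 : Real.sin (4 * φ - θ)
        = Real.sin (2 * φ) * Real.cos (2 * φ - θ) + Real.cos (2 * φ) * Real.sin (2 * φ - θ) := by
      rw [show (4 : ℝ) * φ - θ = 2 * φ + (2 * φ - θ) by ring, Real.sin_add]
    have hθ' : Real.sin θ
        = Real.sin (2 * φ) * Real.cos (2 * φ - θ) - Real.cos (2 * φ) * Real.sin (2 * φ - θ) := by
      have h := Real.sin_sub (2 * φ) (2 * φ - θ)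
      rw [show 2 * φ - (2 * φ - θ) = θ by ring] at h
      exact h
    rw [h4, hθ']
    linear_combination (Real.cos (2 * φ) * Real.sin (2 * φ - θ) - 2) *
      (Real.sin_sq_add_cos_sq (2 * φ - θ))
  -- sin (2φ - θ) = 0 ↔ φ = θ/2
  have hsin0 : Real.sin (2 * φ - θ) = 0 ↔ φ = θ / 2 := by
    constructor
    · intro h
      have := (Real.sin_eq_zero_iff_of_lt_of_lt (by linarith) (by linarith)).mp h
      linarith
    · intro h
      rw [h, show 2 * (θ / 2) - θ = 0 by ring, Real.sin_zero]
  -- nonnegativity pieces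
  have h1 : 0 ≤ Real.sin (2 * φ - θ) ^ 2 * (2 - Real.cos (2 * φ) * Real.sin (2 * φ - θ)) := by
    have : Real.cos (2 * φ) * Real.sin (2 * φ - θ) ≤ 1 := by nlinarith
    nlinarith [sq_nonneg (Real.sin (2 * φ - θ))]
  have h2 : 0 ≤ Real.sin (2 * φ) * (2 - Real.cos (2 * φ - θ) - Real.cos (2 * φ - θ) ^ 3) := by
    have : Real.cos (2 * φ - θ) ^ 3 ≤ 1 := by nlinarith
    nlinarith
  have h3 : Real.sin (2 * φ - θ) ^ 2 * (2 - Real.cos (2 * φ) * Real.sin (2 * φ - θ))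
      + Real.sin (2 * φ) * (2 - Real.cos (2 * φ - θ) - Real.cos (2 * φ - θ) ^ 3) = 0
      ↔ φ = θ / 2 := by
    constructor
    · intro h
      have ht1 : Real.sin (2 * φ - θ) ^ 2 * (2 - Real.cos (2 * φ) * Real.sin (2 * φ - θ)) = 0 := by
        linarith
      have hpos : 0 < 2 - Real.cos (2 * φ) * Real.sin (2 * φ - θ) := by nlinarith
      have : Real.sin (2 * φ - θ) ^ 2 = 0 := by
        rcases mul_eq_zero.mp ht1 with h' | h'
        · exact h'
        · linarith
      exact hsin0.mp (by nlinarith)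
    · intro h
      have hy : 2 * φ - θ = 0 := by rw [h]; ring
      rw [hy, Real.sin_zero, Real.cos_zero]
      ring
  exact ⟨heq ▸ h3, by linarith, h3⟩
end
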